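/- arXiv:1512.05258 — 2 statements merged into one kernel-verified Lean document; each statement's English description precedes it below -/
import Mathlib

section
/- Let (T_t)_{t≥0} be a strongly continuous contraction semigroup on a Banach space X with generator (L, Dom(L)), let (F(τ))_{τ≥0} be contractions on X, let φ ∈ Dom(L), and let m ∈ ℕ, m ≥ 1. Define Ψ(s) := ‖[F(s/m)]^m φ − T_s φ‖_X for s > 0. Then for every s > 0: Ψ(s)/s ≤ ‖(T_s φ − φ)/s − Lφ‖_X + ‖(F(s/m)φ − φ)/(s/m) − Lφ‖_X + ‖( (1/m)(F(s/m)^{m−1} + F(s/m)^{m−2} + ⋯ + F(s/m) + Id) − Id ) Lφ‖_X. -/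
open MeasureTheory Filter Topology Matrix
open scoped ENNReal NNReal

noncomputable section

variable {X : Type*} [NormedAddCommGroup X] [NormedSpace ℝ X]

/-- `GenAt T φ y`: the strong right derivative at `t = 0` of `t ↦ T t φ` is `y`,
i.e. `φ` lies in the domain of the generator of `T`, with value `y`. -/
def GenAt (T : ℝ → X →L[ℝ] X) (φ y : X) : Prop :=
  Tendsto (fun t : ℝ => t⁻¹ • (T t φ - φ)) (𝓝[>] (0 : ℝ)) (𝓝 y)

/-- A strongly continuous semigroup (for `t ≥ 0`) of bounded linear operators. -/
structure IsC0Semigroup (T : ℝ → X →L[ℝ] X) : Prop where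
  map_zero : T 0 = 1
  map_add : ∀ s t : ℝ, 0 ≤ s → 0 ≤ t → T (s + t) = (T s).comp (T t)
  strong_continuity : ∀ φ : X, Tendsto (fun t : ℝ => T t φ) (𝓝[≥] (0 : ℝ)) (𝓝 φ)

/-- A strongly continuous contraction semigroup (for `t ≥ 0`). -/
structure IsContractionSemigroup (T : ℝ → X →L[ℝ] X) : Prop where
  map_zero : T 0 = 1
  map_add : ∀ s t : ℝ, 0 ≤ s → 0 ≤ t → T (s + t) = (T s).comp (T t)
  contraction : ∀ t : ℝ, 0 ≤ t → ‖T t‖ ≤ 1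
  strong_continuity : ∀ φ : X, Tendsto (fun t : ℝ => T t φ) (𝓝[≥] (0 : ℝ)) (𝓝 φ)

/-- `D` is a core for the generator of the semigroup `T`: every element of the graph of
the generator is approximated by elements of `D` together with their generator values. -/
def IsCore (T : ℝ → X →L[ℝ] X) (D : Set X) : Prop :=
  (∀ φ ∈ D, ∃ y, GenAt T φ y) ∧
  (∀ φ y, GenAt T φ y → ∃ u v : ℕ → X, (∀ n, u n ∈ D) ∧ (∀ n, GenAt T (u n) (v n)) ∧
      Tendsto u atTop (𝓝 φ) ∧ Tendsto v atTop (𝓝 y))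

/-- `(L, domL)` is the generator of the semigroup `T`. -/
def IsGenerator (T : ℝ → X →L[ℝ] X) (L : X → X) (domL : Set X) : Prop :=
  (∀ φ : X, φ ∈ domL ↔ ∃ y, GenAt T φ y) ∧ (∀ φ ∈ domL, GenAt T φ (L φ))

/-- `(F t)` is a family of contractions with `F 0 = Id`, strongly continuous in `t`,
Chernoff equivalent to the semigroup `T` whose generator restricted to the core `D` is `L`. -/
def ChernoffEquivOn (F T : ℝ → X →L[ℝ] X) (L : X → X) (D : Set X) : Prop :=
  F 0 = 1 ∧ (∀ t : ℝ, 0 ≤ t → ‖F t‖ ≤ 1) ∧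
  (∀ φ : X, ContinuousOn (fun t : ℝ => F t φ) (Set.Ici (0 : ℝ))) ∧
  IsCore T D ∧ (∀ φ ∈ D, GenAt T φ (L φ)) ∧
  (∀ φ ∈ D, Tendsto (fun t : ℝ => t⁻¹ • (F t φ - φ)) (𝓝[>] (0 : ℝ)) (𝓝 (L φ)))

/-- `(F t)` is Chernoff equivalent to the semigroup `T` (for some core of the generator). -/
def ChernoffEquiv (F T : ℝ → X →L[ℝ] X) : Prop :=
  F 0 = 1 ∧ (∀ φ : X, ContinuousOn (fun t : ℝ => F t φ) (Set.Ici (0 : ℝ))) ∧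
  (∃ a : ℝ, 0 ≤ a ∧ ∀ t : ℝ, 0 ≤ t → ‖F t‖ ≤ Real.exp (a * t)) ∧
  (∃ D : Set X, IsCore T D ∧ ∀ φ ∈ D, ∃ y, GenAt T φ y ∧
      Tendsto (fun t : ℝ => t⁻¹ • (F t φ - φ)) (𝓝[>] (0 : ℝ)) (𝓝 y))

/-- `T t φ = lim_n [F (t/n)]ⁿ φ`, locally uniformly with respect to `t ≥ 0`. -/
def ChernoffLimit (F T : ℝ → X →L[ℝ] X) : Prop :=
  ∀ φ : X, ∀ t₀ : ℝ, 0 < t₀ →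
    TendstoUniformlyOn (fun (n : ℕ) (t : ℝ) => (F (t / (n : ℝ)) ^ n) φ)
      (fun t : ℝ => T t φ) atTop (Set.Icc (0 : ℝ) t₀)

/-- A convolution semigroup of sub-probability Borel measures on `ℝ` supported by `[0,∞)`:
`η_0 = δ_0`, `η_{s+t} = η_s * η_t`, and `η_t → δ_0` weakly as `t → 0`. -/
structure IsConvSemigroup (η : ℝ → Measure ℝ) : Prop where
  mass_le_one : ∀ t : ℝ, 0 ≤ t → η t Set.univ ≤ 1
  support_nonneg : ∀ t : ℝ, 0 ≤ t → η t (Set.Iio (0 : ℝ)) = 0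
  map_zero : η 0 = Measure.dirac 0
  conv : ∀ s t : ℝ, 0 ≤ s → 0 ≤ t → ∀ g : BoundedContinuousFunction ℝ ℝ,
      ∫ x, g x ∂(η (s + t)) = ∫ x, (∫ y, g (x + y) ∂(η t)) ∂(η s)
  weak_cont_zero : ∀ g : BoundedContinuousFunction ℝ ℝ,
      Tendsto (fun t : ℝ => ∫ x, g x ∂(η t)) (𝓝[>] (0 : ℝ)) (𝓝 (g 0))

/-- `η` is associated with the Bernstein function with triplet `(σ, lam, μ)`,
via Laplace transforms: `∫ e^{-sx} η_t(ds) = e^{-t f(x)}` with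
`f(x) = σ + lam·x + ∫ (1 - e^{-sx}) μ(ds)`. -/
def AssociatedBernstein (η : ℝ → Measure ℝ) (σ lam : ℝ) (μ : Measure ℝ) : Prop :=
  ∀ x : ℝ, 0 < x → ∀ t : ℝ, 0 < t →
    ∫ s, Real.exp (-(s * x)) ∂(η t)
      = Real.exp (-(t * (σ + lam * x + ∫ s, (1 - Real.exp (-(s * x))) ∂μ)))

/-- Generator hypothesis on the convolution semigroup `η⁰`: for every `χ ∈ C²_b(ℝ)` with
`χ(0) = 0` one has `lim_{t↓0} t⁻¹ ∫ χ dη⁰_t = ∫ χ dμ`. -/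
def GeneratorHypothesis (η0 : ℝ → Measure ℝ) (μ : Measure ℝ) : Prop :=
  ∀ χ : ℝ → ℝ, ContDiff ℝ 2 χ →
    (∃ M : ℝ, ∀ x : ℝ, |χ x| + |deriv χ x| + |deriv (deriv χ) x| ≤ M) →
    χ 0 = 0 →
    Tendsto (fun t : ℝ => t⁻¹ * ∫ s, χ s ∂(η0 t)) (𝓝[>] (0 : ℝ)) (𝓝 (∫ s, χ s ∂μ))

/-- A (Radon) measure `μ` on `(0,∞)` with `∫ s/(1+s) μ(ds) < ∞`. -/
def IsLevyMeasure (μ : Measure ℝ) : Prop :=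
  μ (Set.Iic (0 : ℝ)) = 0 ∧ Integrable (fun s : ℝ => s / (1 + s)) μ

end


/-! Writing `B = F (s/m)`, `τ = s/m` and `z = τ • Lφ`, the telescoping identity
`Bᵐ φ - φ = ∑_{k<m} Bᵏ (B φ - φ)` gives
`Bᵐ φ - T s φ = ∑_{k<m} Bᵏ (B φ - φ - z) + (∑_{k<m} Bᵏ z - m • z) - (T s φ - φ - m • z)`,
and each of the `m` terms of the first sum has norm at most `‖B φ - φ - z‖` because `B` is a
contraction. Dividing by `s = m τ` gives the three difference quotients. -/

section

variable {𝕜 E : Type*} [NontriviallyNormedField 𝕜] [SeminormedAddCommGroup E] [NormedSpace 𝕜 E]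

theorem ContinuousLinearMap.norm_pow_le_one {B : E →L[𝕜] E} (hB : ‖B‖ ≤ 1) (k : ℕ) :
    ‖B ^ k‖ ≤ 1 := by
  rcases Nat.eq_zero_or_pos k with rfl | hk
  · exact ContinuousLinearMap.norm_id_le
  · exact (norm_pow_le' B hk).trans (pow_le_one₀ (norm_nonneg B) hB)

theorem ContinuousLinearMap.sum_range_pow_apply_sub (B : E →L[𝕜] E) (φ : E) (m : ℕ) :
    ∑ k ∈ Finset.range m, (B ^ k) (B φ - φ) = (B ^ m) φ - φ := by
  simpa [pow_succ, mul_apply_eq_comp] using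
    Finset.sum_range_sub (fun k => (B ^ k) φ) m

theorem ContinuousLinearMap.norm_pow_apply_sub_le {B : E →L[𝕜] E} (hB : ‖B‖ ≤ 1)
    (φ ψ z : E) (m : ℕ) :
    ‖(B ^ m) φ - ψ‖ ≤
      ‖ψ - φ - m • z‖ + m * ‖B φ - φ - z‖ + ‖∑ k ∈ Finset.range m, (B ^ k) z - m • z‖ := by
  have hdecomp : (B ^ m) φ - ψ = ∑ k ∈ Finset.range m, (B ^ k) (B φ - φ - z)
      + (∑ k ∈ Finset.range m, (B ^ k) z - m • z) - (ψ - φ - m • z) := by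
    rw [show (B ^ m) φ - ψ = ((B ^ m) φ - φ) - (ψ - φ) by abel, ← B.sum_range_pow_apply_sub φ m]
    simp only [map_sub, Finset.sum_sub_distrib]
    abel
  have hsum : ‖∑ k ∈ Finset.range m, (B ^ k) (B φ - φ - z)‖ ≤ m * ‖B φ - φ - z‖ := by
    simpa using norm_sum_le_of_le (Finset.range m) fun k _ =>
      (B ^ k).le_of_opNorm_le (norm_pow_le_one hB k) (B φ - φ - z)
  rw [hdecomp]
  calc _ ≤ ‖∑ k ∈ Finset.range m, (B ^ k) (B φ - φ - z)‖
          + ‖∑ k ∈ Finset.range m, (B ^ k) z - m • z‖ + ‖ψ - φ - m • z‖ :=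
        (norm_sub_le _ _).trans (add_le_add_left (norm_add_le _ _) _)
    _ ≤ _ := by linarith

end

theorem norm_sub_smul_eq_mul_norm_inv_smul_sub {E : Type*} [SeminormedAddCommGroup E]
    [NormedSpace ℝ E] {t : ℝ} (ht : 0 < t) (x y : E) :
    ‖x - t • y‖ = t * ‖t⁻¹ • x - y‖ := by
  rw [← norm_smul_of_nonneg ht.le, smul_sub, smul_inv_smul₀ ht.ne']

theorem Psi_estimate_general
    {X : Type*} [NormedAddCommGroup X] [NormedSpace ℝ X]
    (T : ℝ → X →L[ℝ] X)
    (F : ℝ → X →L[ℝ] X) (hF : ∀ τ : ℝ, 0 ≤ τ → ‖F τ‖ ≤ 1)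
    (φ Lφ : X)
    (m : ℕ) (hm : 1 ≤ m) (s : ℝ) (hs : 0 < s) :
    ‖(F (s / (m : ℝ)) ^ m) φ - T s φ‖ / s ≤
      ‖s⁻¹ • (T s φ - φ) - Lφ‖ +
      ‖(s / (m : ℝ))⁻¹ • (F (s / (m : ℝ)) φ - φ) - Lφ‖ +
      ‖(m : ℝ)⁻¹ • (∑ k ∈ Finset.range m, (F (s / (m : ℝ)) ^ k) Lφ) - Lφ‖ := by
  set τ := s / (m : ℝ) with hτ_def
  have hm_pos : (0 : ℝ) < m := by exact_mod_cast hm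
  have hτ : 0 < τ := div_pos hs hm_pos
  have hmτ : (m : ℝ) * τ = s := mul_div_cancel₀ s hm_pos.ne'
  have hmz : m • τ • Lφ = s • Lφ := by rw [← Nat.cast_smul_eq_nsmul ℝ, smul_smul, hmτ]
  have hdrift : ∑ k ∈ Finset.range m, (F τ ^ k) (τ • Lφ) - s • Lφ
      = s • ((m : ℝ)⁻¹ • ∑ k ∈ Finset.range m, (F τ ^ k) Lφ - Lφ) := by
    simp only [map_smul, ← Finset.smul_sum, smul_sub, smul_smul, hτ_def, div_eq_mul_inv]
  have key := (F τ).norm_pow_apply_sub_le (hF τ hτ.le) φ (T s φ) (τ • Lφ) m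
  rw [hmz, norm_sub_smul_eq_mul_norm_inv_smul_sub hs, norm_sub_smul_eq_mul_norm_inv_smul_sub hτ,
    ← mul_assoc, hmτ, hdrift, norm_smul_of_nonneg hs.le] at key
  rw [div_le_iff₀ hs]
  linarith

/-- (Lemma 3) The estimate for `Ψ_t(s)/s`. -/
theorem Psi_estimate
    {X : Type*} [NormedAddCommGroup X] [NormedSpace ℝ X]
    (T : ℝ → X →L[ℝ] X) (hT : IsContractionSemigroup T)
    (F : ℝ → X →L[ℝ] X) (hF : ∀ τ : ℝ, 0 ≤ τ → ‖F τ‖ ≤ 1)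
    (φ Lφ : X) (hφ : GenAt T φ Lφ)
    (m : ℕ) (hm : 1 ≤ m) (s : ℝ) (hs : 0 < s) :
    ‖(F (s / (m : ℝ)) ^ m) φ - T s φ‖ / s ≤
      ‖s⁻¹ • (T s φ - φ) - Lφ‖ +
      ‖(s / (m : ℝ))⁻¹ • (F (s / (m : ℝ)) φ - φ) - Lφ‖ +
      ‖(m : ℝ)⁻¹ • (∑ k ∈ Finset.range m, (F (s / (m : ℝ)) ^ k) Lφ) - Lφ‖ :=
  Psi_estimate_general T F hF φ Lφ m hm s hs
end

section
/- Let (T_t)_{t≥0} be a strongly continuous contraction semigroup on a Banach space X with generator (L, Dom(L)), let (F(t))_{t≥0} be a family of contractions on X Chernoff equivalent to (T_t) with core D, and let m : (0,∞) → ℕ be monotone with m(t) → ∞ as t → 0. Fix φ ∈ D and define Ψ_t(s) := ‖[F(s/m(t))]^{m(t)} φ − T_s φ‖_X. Then for every ε > 0 there exist t_ε > 0 and s_ε > 0 such that Ψ_t(s)/s < ε for all t ∈ (0, t_ε] and all s ∈ (0, s_ε]. -/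
open MeasureTheory Filter Topology Matrix
open scoped ENNReal NNReal

section AuxPsi

variable {X : Type*} [NormedAddCommGroup X] [NormedSpace ℝ X]

lemma aux_norm_pow_apply_le (A : X →L[ℝ] X) (hA : ‖A‖ ≤ 1) (k : ℕ) (x : X) :
    ‖(A ^ k) x‖ ≤ ‖x‖ := by
  induction k with
  | zero => simp
  | succ k ih =>
    rw [pow_succ', ContinuousLinearMap.mul_apply]
    calc ‖A ((A ^ k) x)‖ ≤ ‖A‖ * ‖(A ^ k) x‖ := A.le_opNorm _
      _ ≤ 1 * ‖x‖ := mul_le_mul hA ih (norm_nonneg _) zero_le_one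
      _ = ‖x‖ := one_mul _

lemma aux_telescope (A : X →L[ℝ] X) (n : ℕ) (x : X) :
    (A ^ n) x - x = ∑ k ∈ Finset.range n, (A ^ k) (A x - x) := by
  induction n with
  | zero => simp
  | succ n ih =>
    rw [Finset.sum_range_succ, ← ih, pow_succ, ContinuousLinearMap.mul_apply, map_sub]
    have : (A ^ n) (A x) = (A ^ (n+1)) x := by
      rw [pow_succ, ContinuousLinearMap.mul_apply]
    rw [this]
    abel

lemma aux_norm_pow_sub_self (A : X →L[ℝ] X) (hA : ‖A‖ ≤ 1) (k : ℕ) (x : X) :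
    ‖(A ^ k) x - x‖ ≤ (k : ℝ) * ‖A x - x‖ := by
  rw [aux_telescope]
  refine (norm_sum_le _ _).trans ?_
  calc ∑ j ∈ Finset.range k, ‖(A ^ j) (A x - x)‖
      ≤ ∑ _j ∈ Finset.range k, ‖A x - x‖ :=
        Finset.sum_le_sum fun j _ => aux_norm_pow_apply_le A hA j _
    _ = (k : ℝ) * ‖A x - x‖ := by
        simp [Finset.sum_const, Finset.card_range, nsmul_eq_mul]

lemma aux_key (A B : X →L[ℝ] X) (hA : ‖A‖ ≤ 1) (hB : ‖B‖ ≤ 1) (n : ℕ) (φ c : X) :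
    ‖(A ^ n) φ - (B ^ n) φ‖ ≤
      (n : ℝ) * ‖A φ - φ - c‖ + (n : ℝ) * ‖B φ - φ - c‖ +
      (∑ k ∈ Finset.range n, ‖(A ^ k) c - c‖) +
      (∑ k ∈ Finset.range n, ‖(B ^ k) c - c‖) := by
  have sA : ∀ C : X →L[ℝ] X, ∑ k ∈ Finset.range n, (C ^ k) (C φ - φ - c)
      = (∑ k ∈ Finset.range n, (C ^ k) (C φ - φ)) - ∑ k ∈ Finset.range n, (C ^ k) c := by
    intro C
    rw [← Finset.sum_sub_distrib]
    exact Finset.sum_congr rfl fun k _ => map_sub _ _ _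
  have sc : ∀ C : X →L[ℝ] X, ∑ k ∈ Finset.range n, ((C ^ k) c - c)
      = (∑ k ∈ Finset.range n, (C ^ k) c) - n • c := by
    intro C
    rw [Finset.sum_sub_distrib, Finset.sum_const, Finset.card_range]
  have hid : (A ^ n) φ - (B ^ n) φ =
      (∑ k ∈ Finset.range n, (A ^ k) (A φ - φ - c))
      - (∑ k ∈ Finset.range n, (B ^ k) (B φ - φ - c))
      + ((∑ k ∈ Finset.range n, ((A ^ k) c - c))
        - (∑ k ∈ Finset.range n, ((B ^ k) c - c))) := by
    rw [sA A, sA B, sc A, sc B, ← aux_telescope A n φ, ← aux_telescope B n φ]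
    abel
  have h1 : ∀ (C : X →L[ℝ] X), ‖C‖ ≤ 1 →
      ‖∑ k ∈ Finset.range n, (C ^ k) (C φ - φ - c)‖ ≤ (n : ℝ) * ‖C φ - φ - c‖ := by
    intro C hC
    refine (norm_sum_le _ _).trans ?_
    calc ∑ k ∈ Finset.range n, ‖(C ^ k) (C φ - φ - c)‖
        ≤ ∑ _k ∈ Finset.range n, ‖C φ - φ - c‖ :=
          Finset.sum_le_sum fun k _ => aux_norm_pow_apply_le C hC k _
      _ = (n : ℝ) * ‖C φ - φ - c‖ := by
          simp [Finset.sum_const, Finset.card_range, nsmul_eq_mul]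
  have h3 := norm_sum_le (Finset.range n) (fun k => (A ^ k) c - c)
  have h4 := norm_sum_le (Finset.range n) (fun k => (B ^ k) c - c)
  rw [hid]
  have step : ‖(∑ k ∈ Finset.range n, (A ^ k) (A φ - φ - c))
      - (∑ k ∈ Finset.range n, (B ^ k) (B φ - φ - c))
      + ((∑ k ∈ Finset.range n, ((A ^ k) c - c))
        - (∑ k ∈ Finset.range n, ((B ^ k) c - c)))‖ ≤
      (‖∑ k ∈ Finset.range n, (A ^ k) (A φ - φ - c)‖
        + ‖∑ k ∈ Finset.range n, (B ^ k) (B φ - φ - c)‖)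
      + (‖∑ k ∈ Finset.range n, ((A ^ k) c - c)‖
        + ‖∑ k ∈ Finset.range n, ((B ^ k) c - c)‖) :=
    (norm_add_le _ _).trans (add_le_add (norm_sub_le _ _) (norm_sub_le _ _))
  have := h1 A hA
  have := h1 B hB
  linarith

lemma aux_semigroup_pow {T : ℝ → X →L[ℝ] X} (hT : IsContractionSemigroup T)
    {τ : ℝ} (hτ : 0 ≤ τ) : ∀ k : ℕ, T ((k : ℝ) * τ) = (T τ) ^ k := by
  intro k
  induction k with
  | zero => simpa using hT.map_zero
  | succ k ih =>
    have h : ((k + 1 : ℕ) : ℝ) * τ = (k : ℝ) * τ + τ := by push_cast; ring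
    rw [h, hT.map_add _ _ (by positivity) hτ, ih, pow_succ]
    rfl

lemma aux_thresh {f : ℝ → X} {y : X} (hf : Tendsto f (𝓝[>] (0 : ℝ)) (𝓝 y))
    {δ : ℝ} (hδ : 0 < δ) :
    ∃ a : ℝ, 0 < a ∧ ∀ τ : ℝ, 0 < τ → τ ≤ a → ‖f τ - y‖ < δ := by
  rw [Metric.tendsto_nhdsWithin_nhds] at hf
  obtain ⟨b, hb, H⟩ := hf δ hδ
  refine ⟨b / 2, by positivity, fun τ h1 h2 => ?_⟩
  have := H (Set.mem_Ioi.mpr h1)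
    (by rw [Real.dist_eq, sub_zero, abs_of_pos h1]; linarith)
  rwa [dist_eq_norm] at this

lemma aux_thresh_ici {f : ℝ → X} {y : X} (hf : Tendsto f (𝓝[≥] (0 : ℝ)) (𝓝 y))
    {δ : ℝ} (hδ : 0 < δ) :
    ∃ a : ℝ, 0 < a ∧ ∀ u : ℝ, 0 ≤ u → u ≤ a → ‖f u - y‖ < δ := by
  rw [Metric.tendsto_nhdsWithin_nhds] at hf
  obtain ⟨b, hb, H⟩ := hf δ hδ
  refine ⟨b / 2, by positivity, fun u h1 h2 => ?_⟩
  have := H (Set.mem_Ici.mpr h1)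
    (by rw [Real.dist_eq, sub_zero, abs_of_nonneg h1]; linarith)
  rwa [dist_eq_norm] at this

end AuxPsi

/-- (Lemma 4) Uniform smallness of `Ψ_t(s)/s` for small `t` and `s`. -/
theorem Psi_estimate_uniform
    {X : Type*} [NormedAddCommGroup X] [NormedSpace ℝ X] [CompleteSpace X]
    (T : ℝ → X →L[ℝ] X) (hT : IsContractionSemigroup T)
    (L : X → X) (domL : Set X) (hgen : IsGenerator T L domL)
    (F : ℝ → X →L[ℝ] X) (D : Set X) (hD : D ⊆ domL)
    (hF : ChernoffEquivOn F T L D)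
    (m : ℝ → ℕ) (hm_mono : AntitoneOn m (Set.Ioi (0 : ℝ)))
    (hm_top : Tendsto m (𝓝[>] (0 : ℝ)) atTop)
    (φ : X) (hφ : φ ∈ D) :
    ∀ ε : ℝ, 0 < ε → ∃ tε : ℝ, 0 < tε ∧ ∃ sε : ℝ, 0 < sε ∧
      ∀ t : ℝ, 0 < t → t ≤ tε → ∀ s : ℝ, 0 < s → s ≤ sε →
        ‖(F (s / (m t : ℝ)) ^ m t) φ - T s φ‖ / s < ε := by
  intro ε hε
  obtain ⟨hF0, hFc, hFcont, hCore, hFgenD, hFder⟩ := hF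
  have hGφ : GenAt T φ (L φ) := hFgenD φ hφ
  have hGφ' : Tendsto (fun t : ℝ => t⁻¹ • (T t φ - φ)) (𝓝[>] (0 : ℝ)) (𝓝 (L φ)) := hGφ
  -- Step 1: find χ ∈ D close to L φ
  obtain ⟨χ, hχD, hχnear⟩ : ∃ χ, χ ∈ D ∧ ‖χ - L φ‖ ≤ ε / 16 := by
    have hsemi : ∀ h : ℝ, 0 ≤ h → GenAt T (T h φ) ((T h) (L φ)) := by
      intro h hh
      have base : Tendsto (fun t : ℝ => (T h) (t⁻¹ • (T t φ - φ)))
          (𝓝[>] (0 : ℝ)) (𝓝 ((T h) (L φ))) :=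
        ((T h).continuous.tendsto _).comp hGφ'
      refine Tendsto.congr' ?_ base
      filter_upwards [self_mem_nhdsWithin] with t ht
      have htpos : (0 : ℝ) < t := ht
      have hc : T t ((T h) φ) = (T h) ((T t) φ) := by
        calc T t ((T h) φ) = ((T t).comp (T h)) φ := rfl
          _ = T (t + h) φ := by rw [← hT.map_add t h htpos.le hh]
          _ = T (h + t) φ := by rw [add_comm]
          _ = ((T h).comp (T t)) φ := by rw [hT.map_add h t hh htpos.le]
          _ = (T h) ((T t) φ) := rfl
      show (T h) (t⁻¹ • (T t φ - φ)) = t⁻¹ • (T t ((T h) φ) - (T h) φ)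
      rw [_root_.map_smul, map_sub, hc]
    obtain ⟨h0, hh0, H0⟩ := aux_thresh hGφ' (show (0 : ℝ) < ε / 32 by positivity)
    have hφ'near : ‖h0⁻¹ • (T h0 φ - φ) - L φ‖ < ε / 32 := H0 h0 hh0 le_rfl
    have hGnew : GenAt T (h0⁻¹ • (T h0 φ - φ)) (h0⁻¹ • ((T h0) (L φ) - L φ)) := by
      have h1 : Tendsto (fun t : ℝ => t⁻¹ • (T t ((T h0) φ) - (T h0) φ))
          (𝓝[>] (0 : ℝ)) (𝓝 ((T h0) (L φ))) := hsemi h0 hh0.le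
      have base := (h1.sub hGφ').const_smul (h0⁻¹)
      refine Tendsto.congr' ?_ base
      filter_upwards [self_mem_nhdsWithin] with t _
      show h0⁻¹ • (t⁻¹ • (T t ((T h0) φ) - (T h0) φ) - t⁻¹ • (T t φ - φ))
          = t⁻¹ • (T t (h0⁻¹ • (T h0 φ - φ)) - h0⁻¹ • (T h0 φ - φ))
      rw [_root_.map_smul, map_sub]
      module
    obtain ⟨u, v, huD, _, huT, _⟩ := hCore.2 _ _ hGnew
    obtain ⟨N, hN⟩ := (Metric.tendsto_atTop.mp huT (ε / 32) (by positivity))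
    have hNc : ‖u N - h0⁻¹ • (T h0 φ - φ)‖ < ε / 32 := by
      have := hN N le_rfl; rwa [dist_eq_norm] at this
    refine ⟨u N, huD N, ?_⟩
    calc ‖u N - L φ‖
        ≤ ‖u N - h0⁻¹ • (T h0 φ - φ)‖ + ‖h0⁻¹ • (T h0 φ - φ) - L φ‖ := by
          have := norm_add_le (u N - h0⁻¹ • (T h0 φ - φ)) (h0⁻¹ • (T h0 φ - φ) - L φ)
          simpa using this
      _ ≤ ε / 16 := by linarith
  have hCpos : (0 : ℝ) < ‖L χ‖ + 1 := by positivity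
  -- thresholds
  obtain ⟨a1, ha1, H1⟩ := aux_thresh (hFder φ hφ) (show (0 : ℝ) < ε / 8 by positivity)
  obtain ⟨a2, ha2, H2⟩ := aux_thresh hGφ' (show (0 : ℝ) < ε / 8 by positivity)
  obtain ⟨a3, ha3, H3⟩ := aux_thresh (hFder χ hχD) (show (0 : ℝ) < 1 by norm_num)
  obtain ⟨a4, ha4, H4⟩ := aux_thresh_ici (hT.strong_continuity (L φ))
    (show (0 : ℝ) < ε / 8 by positivity)
  -- tε from m → ∞
  obtain ⟨t0, ht0, Hm⟩ : ∃ t0 : ℝ, 0 < t0 ∧ ∀ t : ℝ, 0 < t → t ≤ t0 → 1 ≤ m t := by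
    have hm1 : ∀ᶠ t in 𝓝[>] (0 : ℝ), 1 ≤ m t := hm_top.eventually (eventually_ge_atTop 1)
    rw [eventually_nhdsWithin_iff, Metric.eventually_nhds_iff] at hm1
    obtain ⟨b, hb, Hb⟩ := hm1
    refine ⟨b / 2, by positivity, fun t h1 h2 => ?_⟩
    exact Hb (by rw [Real.dist_eq, sub_zero, abs_of_pos h1]; linarith) h1
  set sε : ℝ := min (min a1 a2) (min (min a3 a4) (ε / (8 * (‖L χ‖ + 1)))) with hsε
  have hsεpos : 0 < sε := by
    refine lt_min (lt_min ha1 ha2) (lt_min (lt_min ha3 ha4) ?_)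
    positivity
  refine ⟨t0, ht0, sε, hsεpos, ?_⟩
  intro t ht htle s hs hsle
  have hsa1 : s ≤ a1 := hsle.trans ((min_le_left _ _).trans (min_le_left _ _))
  have hsa2 : s ≤ a2 := hsle.trans ((min_le_left _ _).trans (min_le_right _ _))
  have hsa3 : s ≤ a3 := hsle.trans
    ((min_le_right _ _).trans ((min_le_left _ _).trans (min_le_left _ _)))
  have hsa4 : s ≤ a4 := hsle.trans
    ((min_le_right _ _).trans ((min_le_left _ _).trans (min_le_right _ _)))
  have hsa5 : s ≤ ε / (8 * (‖L χ‖ + 1)) := hsle.trans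
    ((min_le_right _ _).trans (min_le_right _ _))
  have hn1 : 1 ≤ m t := Hm t ht htle
  set n : ℕ := m t with hn
  have hnR : (1 : ℝ) ≤ (n : ℝ) := by exact_mod_cast hn1
  have hnne : (n : ℝ) ≠ 0 := by linarith
  set τ : ℝ := s / (n : ℝ) with hτdef
  have hτpos : 0 < τ := div_pos hs (by linarith)
  have hτle_s : τ ≤ s := div_le_self hs.le hnR
  have hnτ : (n : ℝ) * τ = s := by
    rw [hτdef]; field_simp
  have hTs : T s = (T τ) ^ n := by
    rw [← hnτ]; exact aux_semigroup_pow hT hτpos.le n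
  set A : X →L[ℝ] X := F τ with hAdef
  set B : X →L[ℝ] X := T τ with hBdef
  have hAn : ‖A‖ ≤ 1 := hFc τ hτpos.le
  have hBn : ‖B‖ ≤ 1 := hT.contraction τ hτpos.le
  -- elementary per-term estimates
  have smul_id : ∀ x y : X, x - y - τ • (L φ) = τ • (τ⁻¹ • (x - y) - L φ) := by
    intro x y; rw [smul_sub, smul_inv_smul₀ hτpos.ne']
  have e1 : ‖A φ - φ - τ • (L φ)‖ ≤ τ * (ε / 8) := by
    rw [smul_id, norm_smul, Real.norm_eq_abs, abs_of_pos hτpos]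
    exact mul_le_mul_of_nonneg_left (H1 τ hτpos (hτle_s.trans hsa1)).le hτpos.le
  have e2 : ‖B φ - φ - τ • (L φ)‖ ≤ τ * (ε / 8) := by
    rw [smul_id, norm_smul, Real.norm_eq_abs, abs_of_pos hτpos]
    exact mul_le_mul_of_nonneg_left (H2 τ hτpos (hτle_s.trans hsa2)).le hτpos.le
  have hAχ : ‖A χ - χ‖ ≤ τ * (‖L χ‖ + 1) := by
    have h3 := H3 τ hτpos (hτle_s.trans hsa3)
    have hb : ‖τ⁻¹ • (A χ - χ)‖ ≤ ‖L χ‖ + 1 := by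
      calc ‖τ⁻¹ • (A χ - χ)‖ = ‖(τ⁻¹ • (A χ - χ) - L χ) + L χ‖ := by rw [sub_add_cancel]
        _ ≤ ‖τ⁻¹ • (A χ - χ) - L χ‖ + ‖L χ‖ := norm_add_le _ _
        _ ≤ ‖L χ‖ + 1 := by linarith
    calc ‖A χ - χ‖ = τ * ‖τ⁻¹ • (A χ - χ)‖ := by
          rw [norm_smul, Real.norm_eq_abs, abs_of_pos (inv_pos.mpr hτpos)]
          field_simp
      _ ≤ τ * (‖L χ‖ + 1) := mul_le_mul_of_nonneg_left hb hτpos.le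
  have e3 : ∀ k ∈ Finset.range n, ‖(A ^ k) (τ • L φ) - τ • L φ‖ ≤ τ * (ε / 4) := by
    intro k hk
    have hk' : (k : ℝ) ≤ (n : ℝ) := by
      exact_mod_cast (Finset.mem_range.mp hk).le
    have hkτ : (k : ℝ) * τ ≤ s := by
      rw [← hnτ]; exact mul_le_mul_of_nonneg_right hk' hτpos.le
    have step1 : ‖(A ^ k) (L φ) - L φ‖ ≤ ε / 4 := by
      have d1 : ‖(A ^ k) (L φ) - (A ^ k) χ‖ ≤ ε / 16 := by
        rw [← map_sub]
        exact (aux_norm_pow_apply_le A hAn k _).trans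
          (by rw [show L φ - χ = -(χ - L φ) by abel, norm_neg]; exact hχnear)
      have d2 : ‖(A ^ k) χ - χ‖ ≤ (k : ℝ) * (τ * (‖L χ‖ + 1)) :=
        (aux_norm_pow_sub_self A hAn k χ).trans
          (mul_le_mul_of_nonneg_left hAχ k.cast_nonneg)
      have d2' : (k : ℝ) * (τ * (‖L χ‖ + 1)) ≤ ε / 8 := by
        have hb1 : (k : ℝ) * (τ * (‖L χ‖ + 1)) = ((k : ℝ) * τ) * (‖L χ‖ + 1) := by ring
        rw [hb1]
        calc ((k : ℝ) * τ) * (‖L χ‖ + 1) ≤ (ε / (8 * (‖L χ‖ + 1))) * (‖L χ‖ + 1) := by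
              have hkτ' : (k : ℝ) * τ ≤ ε / (8 * (‖L χ‖ + 1)) := hkτ.trans hsa5
              exact mul_le_mul_of_nonneg_right hkτ' hCpos.le
          _ = ε / 8 := by
              rw [div_mul_eq_mul_div, mul_div_mul_right _ _ hCpos.ne']
      have tri : ‖(A ^ k) (L φ) - L φ‖ ≤
          ‖(A ^ k) (L φ) - (A ^ k) χ‖ + ‖(A ^ k) χ - χ‖ + ‖χ - L φ‖ := by
        have hsplit : (A ^ k) (L φ) - L φ =
            ((A ^ k) (L φ) - (A ^ k) χ) + (((A ^ k) χ - χ) + (χ - L φ)) := by abel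
        rw [hsplit]
        calc ‖_ + (_ + _)‖ ≤ ‖(A ^ k) (L φ) - (A ^ k) χ‖ + ‖((A ^ k) χ - χ) + (χ - L φ)‖ :=
              norm_add_le _ _
          _ ≤ ‖(A ^ k) (L φ) - (A ^ k) χ‖ + (‖(A ^ k) χ - χ‖ + ‖χ - L φ‖) := by
              have := norm_add_le ((A ^ k) χ - χ) (χ - L φ)
              linarith
          _ = _ := by ring
      linarith
    rw [_root_.map_smul, ← smul_sub, norm_smul, Real.norm_eq_abs, abs_of_pos hτpos]
    exact mul_le_mul_of_nonneg_left step1 hτpos.le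
  have e4 : ∀ k ∈ Finset.range n, ‖(B ^ k) (τ • L φ) - τ • L φ‖ ≤ τ * (ε / 8) := by
    intro k hk
    have hk' : (k : ℝ) ≤ (n : ℝ) := by
      exact_mod_cast (Finset.mem_range.mp hk).le
    have hkτ : (k : ℝ) * τ ≤ s := by
      rw [← hnτ]; exact mul_le_mul_of_nonneg_right hk' hτpos.le
    have hpow : T ((k : ℝ) * τ) = B ^ k := aux_semigroup_pow hT hτpos.le k
    have h4 : ‖(B ^ k) (L φ) - L φ‖ ≤ ε / 8 := by
      rw [← hpow]
      exact (H4 ((k : ℝ) * τ) (by positivity) (hkτ.trans hsa4)).le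
    rw [_root_.map_smul, ← smul_sub, norm_smul, Real.norm_eq_abs, abs_of_pos hτpos]
    exact mul_le_mul_of_nonneg_left h4 hτpos.le
  -- combine
  have key := aux_key A B hAn hBn n φ (τ • L φ)
  have S3 : ∑ k ∈ Finset.range n, ‖(A ^ k) (τ • L φ) - τ • L φ‖ ≤ (n : ℝ) * (τ * (ε / 4)) := by
    calc ∑ k ∈ Finset.range n, ‖(A ^ k) (τ • L φ) - τ • L φ‖
        ≤ ∑ _k ∈ Finset.range n, τ * (ε / 4) := Finset.sum_le_sum e3
      _ = (n : ℝ) * (τ * (ε / 4)) := by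
          simp [Finset.sum_const, Finset.card_range, nsmul_eq_mul]
  have S4 : ∑ k ∈ Finset.range n, ‖(B ^ k) (τ • L φ) - τ • L φ‖ ≤ (n : ℝ) * (τ * (ε / 8)) := by
    calc ∑ k ∈ Finset.range n, ‖(B ^ k) (τ • L φ) - τ • L φ‖
        ≤ ∑ _k ∈ Finset.range n, τ * (ε / 8) := Finset.sum_le_sum e4
      _ = (n : ℝ) * (τ * (ε / 8)) := by
          simp [Finset.sum_const, Finset.card_range, nsmul_eq_mul]
  have c1 : (n : ℝ) * ‖A φ - φ - τ • L φ‖ ≤ (n : ℝ) * (τ * (ε / 8)) :=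
    mul_le_mul_of_nonneg_left e1 (by positivity)
  have c2 : (n : ℝ) * ‖B φ - φ - τ • L φ‖ ≤ (n : ℝ) * (τ * (ε / 8)) :=
    mul_le_mul_of_nonneg_left e2 (by positivity)
  have total : ‖(A ^ n) φ - (B ^ n) φ‖ ≤ (n : ℝ) * τ * (5 * ε / 8) := by
    have hsum : (n : ℝ) * (τ * (ε / 8)) + (n : ℝ) * (τ * (ε / 8))
        + (n : ℝ) * (τ * (ε / 4)) + (n : ℝ) * (τ * (ε / 8)) = (n : ℝ) * τ * (5 * ε / 8) := by
      ring
    linarith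
  have hfin : ‖(A ^ n) φ - (B ^ n) φ‖ < ε * s := by
    rw [hnτ] at total
    nlinarith [mul_pos hs hε]
  rw [div_lt_iff₀ hs, hTs]
  exact hfin
end
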